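/- arXiv:1404.1912 — 3 statements merged into one kernel-verified Lean document; each statement's English description precedes it below -/
import Mathlib

section
/- The range of the function (θ₁,θ₂) ↦ 2 + 2cos(4πθ₁) + 2cos(4πθ₂) + 2cos(2π(θ₁+θ₂)) + 2cos(2π(θ₁−θ₂)) on [0,1]² is the interval [−2,10]. -/
open Real Set

/-! With `x = cos (2πθ₁)` and `y = cos (2πθ₂)`, the double-angle and addition formulas turn the
character into `4 (x² + xy + y²) - 2`. On the square `[-1, 1]²` the quadratic form `x² + xy + y²`
takes values in `[0, 3]`, so the character lies in `[-2, 10]`; both ends are attained (at `θ = (0, 0)`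
and `θ = (1/4, 1/4)`), and the image of the connected square is an interval. -/

lemma two_add_two_mul_cos_two_mul_add_eq (a b : ℝ) :
    2 + 2 * cos (2 * a) + 2 * cos (2 * b) + 2 * cos (a + b) + 2 * cos (a - b)
      = 4 * (cos a ^ 2 + cos a * cos b + cos b ^ 2) - 2 := by
  rw [cos_two_mul, cos_two_mul, cos_add, cos_sub]
  ring

lemma sq_add_mul_add_sq_mem_Icc {x y : ℝ} (hx : x ∈ Icc (-1) 1) (hy : y ∈ Icc (-1) 1) :
    x ^ 2 + x * y + y ^ 2 ∈ Icc 0 3 := by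
  obtain ⟨hx₁, hx₂⟩ := hx
  obtain ⟨hy₁, hy₂⟩ := hy
  constructor
  · nlinarith [sq_nonneg (x + y), sq_nonneg x, sq_nonneg y]
  · nlinarith [sq_nonneg (x - y), sq_nonneg (x + y)]

noncomputable def chiZ (p : ℝ × ℝ) : ℝ :=
  2 + 2 * cos (4 * π * p.1) + 2 * cos (4 * π * p.2)
    + 2 * cos (2 * π * (p.1 + p.2)) + 2 * cos (2 * π * (p.1 - p.2))

lemma chiZ_eq (p : ℝ × ℝ) :
    chiZ p = 4 * (cos (2 * π * p.1) ^ 2 + cos (2 * π * p.1) * cos (2 * π * p.2)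
      + cos (2 * π * p.2) ^ 2) - 2 := by
  rw [← two_add_two_mul_cos_two_mul_add_eq, chiZ]
  ring_nf

lemma chiZ_mem_Icc (p : ℝ × ℝ) : chiZ p ∈ Icc (-2) 10 := by
  obtain ⟨h₀, h₃⟩ := sq_add_mul_add_sq_mem_Icc (cos_mem_Icc (2 * π * p.1)) (cos_mem_Icc (2 * π * p.2))
  rw [chiZ_eq]
  constructor <;> linarith

lemma chiZ_zero : chiZ (0, 0) = 10 := by
  norm_num [chiZ]

lemma chiZ_quarter : chiZ (1 / 4, 1 / 4) = -2 := by
  rw [chiZ_eq]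
  have hπ : 2 * π * (1 / 4 : ℝ) = π / 2 := by ring
  norm_num [hπ]

lemma continuous_chiZ : Continuous chiZ := by
  unfold chiZ
  fun_prop

theorem range_chi_z :
    (fun p : ℝ × ℝ =>
        2 + 2 * Real.cos (4 * π * p.1) + 2 * Real.cos (4 * π * p.2)
          + 2 * Real.cos (2 * π * (p.1 + p.2)) + 2 * Real.cos (2 * π * (p.1 - p.2))) ''
        (Set.Icc 0 1 ×ˢ Set.Icc 0 1) = Set.Icc (-2) 10 := by
  change chiZ '' (Icc 0 1 ×ˢ Icc 0 1) = Icc (-2) 10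
  refine Subset.antisymm (image_subset_iff.mpr fun p _ => chiZ_mem_Icc p) ?_
  have hconn : IsPreconnected (chiZ '' (Icc 0 1 ×ˢ Icc 0 1)) :=
    (isPreconnected_Icc.prod isPreconnected_Icc).image chiZ continuous_chiZ.continuousOn
  have hmin : -2 ∈ chiZ '' (Icc 0 1 ×ˢ Icc 0 1) :=
    ⟨(1 / 4, 1 / 4), by norm_num [Prod.le_def], chiZ_quarter⟩
  have hmax : 10 ∈ chiZ '' (Icc 0 1 ×ˢ Icc 0 1) :=
    ⟨(0, 0), by norm_num, chiZ_zero⟩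
  exact hconn.Icc_subset hmin hmax
end

section
/- For all θ₁, θ₂ ∈ ℝ, J_{y,z}(θ₁,θ₂)² = 64π⁴(z−3y+5)(z+y+1)(y²+2y+5−4z), where y = 1 + 2cos(2π(θ₁+θ₂)) + 2cos(2π(θ₁−θ₂)), z = 2 + 2cos(4πθ₁) + 2cos(4πθ₂) + 2cos(2π(θ₁+θ₂)) + 2cos(2π(θ₁−θ₂)), and J_{y,z}(θ₁,θ₂) = 16π²(cos(2π(θ₁−3θ₂)) + cos(2π(3θ₁+θ₂)) − cos(2π(θ₁+3θ₂)) − cos(2π(3θ₁−θ₂))). -/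
open Real

/-!
With `u = cos (2πθ₁)` and `v = cos (2πθ₂)` everything is a polynomial in `u`, `v` and the sines:
`y = 1 + 4uv` and `z = 4u² + 4v² + 4uv - 2`, so the three factors are `4(u - v)²`, `4(u + v)²`
and `16(1 - u²)(1 - v²)`. On the other side, the alternating cosine sum in `J` factors, like a
Weyl denominator, as `8 sin(2πθ₁) sin(2πθ₂)(v² - u²)`; squaring it and using
`sin² = 1 - cos²` gives the same product.
-/

theorem Real.sin_mul_sin_three_mul_sub_sin_three_mul_mul_sin (a b : ℝ) :
    sin a * sin (3 * b) - sin (3 * a) * sin b = 4 * sin a * sin b * (cos b ^ 2 - cos a ^ 2) := by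
  rw [sin_three_mul, sin_three_mul, cos_sq', cos_sq']
  ring

theorem Real.cos_alternating_sum_eq (a b : ℝ) :
    cos (a - 3 * b) + cos (3 * a + b) - cos (a + 3 * b) - cos (3 * a - b)
      = 8 * sin a * sin b * (cos b ^ 2 - cos a ^ 2) := by
  linear_combination two_mul_sin_mul_sin (3 * a) b - two_mul_sin_mul_sin a (3 * b)
    + 2 * sin_mul_sin_three_mul_sub_sin_three_mul_mul_sin a b

theorem character_discriminant_factorization {R : Type*} [CommRing R] (u v : R) :
    ((4 * u ^ 2 + 4 * v ^ 2 + 4 * u * v - 2) - 3 * (1 + 4 * u * v) + 5)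
        * ((4 * u ^ 2 + 4 * v ^ 2 + 4 * u * v - 2) + (1 + 4 * u * v) + 1)
        * ((1 + 4 * u * v) ^ 2 + 2 * (1 + 4 * u * v) + 5
          - 4 * (4 * u ^ 2 + 4 * v ^ 2 + 4 * u * v - 2))
      = 256 * (1 - u ^ 2) * (1 - v ^ 2) * (v ^ 2 - u ^ 2) ^ 2 := by
  ring

theorem jacobian_sq_factorization_of_angles (a b : ℝ) :
    (16 * π ^ 2 * (cos (a - 3 * b) + cos (3 * a + b) - cos (a + 3 * b) - cos (3 * a - b))) ^ 2
      = 64 * π ^ 4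
          * ((2 + 2 * cos (2 * a) + 2 * cos (2 * b) + 2 * cos (a + b) + 2 * cos (a - b))
              - 3 * (1 + 2 * cos (a + b) + 2 * cos (a - b)) + 5)
          * ((2 + 2 * cos (2 * a) + 2 * cos (2 * b) + 2 * cos (a + b) + 2 * cos (a - b))
              + (1 + 2 * cos (a + b) + 2 * cos (a - b)) + 1)
          * ((1 + 2 * cos (a + b) + 2 * cos (a - b)) ^ 2
              + 2 * (1 + 2 * cos (a + b) + 2 * cos (a - b)) + 5
              - 4 * (2 + 2 * cos (2 * a) + 2 * cos (2 * b) + 2 * cos (a + b) + 2 * cos (a - b))) := by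
  have hy : 1 + 2 * cos (a + b) + 2 * cos (a - b) = 1 + 4 * cos a * cos b := by
    linear_combination -2 * two_mul_cos_mul_cos a b
  have hz : 2 + 2 * cos (2 * a) + 2 * cos (2 * b) + 2 * cos (a + b) + 2 * cos (a - b)
      = 4 * cos a ^ 2 + 4 * cos b ^ 2 + 4 * cos a * cos b - 2 := by
    rw [cos_two_mul, cos_two_mul]
    linear_combination -2 * two_mul_cos_mul_cos a b
  rw [hy, hz, mul_assoc (64 * π ^ 4), mul_assoc (64 * π ^ 4),
    character_discriminant_factorization, cos_alternating_sum_eq]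
  simp only [mul_pow, sin_sq]
  ring

theorem jacobian_yz_sq_factorization (θ₁ θ₂ : ℝ) :
    (16 * π ^ 2 * (Real.cos (2 * π * (θ₁ - 3 * θ₂)) + Real.cos (2 * π * (3 * θ₁ + θ₂))
        - Real.cos (2 * π * (θ₁ + 3 * θ₂)) - Real.cos (2 * π * (3 * θ₁ - θ₂)))) ^ 2
      = 64 * π ^ 4
          * ((2 + 2 * Real.cos (4 * π * θ₁) + 2 * Real.cos (4 * π * θ₂)
                + 2 * Real.cos (2 * π * (θ₁ + θ₂)) + 2 * Real.cos (2 * π * (θ₁ - θ₂)))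
              - 3 * (1 + 2 * Real.cos (2 * π * (θ₁ + θ₂)) + 2 * Real.cos (2 * π * (θ₁ - θ₂)))
              + 5)
          * ((2 + 2 * Real.cos (4 * π * θ₁) + 2 * Real.cos (4 * π * θ₂)
                + 2 * Real.cos (2 * π * (θ₁ + θ₂)) + 2 * Real.cos (2 * π * (θ₁ - θ₂)))
              + (1 + 2 * Real.cos (2 * π * (θ₁ + θ₂)) + 2 * Real.cos (2 * π * (θ₁ - θ₂)))
              + 1)
          * ((1 + 2 * Real.cos (2 * π * (θ₁ + θ₂)) + 2 * Real.cos (2 * π * (θ₁ - θ₂))) ^ 2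
              + 2 * (1 + 2 * Real.cos (2 * π * (θ₁ + θ₂)) + 2 * Real.cos (2 * π * (θ₁ - θ₂)))
              + 5
              - 4 * (2 + 2 * Real.cos (4 * π * θ₁) + 2 * Real.cos (4 * π * θ₂)
                  + 2 * Real.cos (2 * π * (θ₁ + θ₂)) + 2 * Real.cos (2 * π * (θ₁ - θ₂)))) := by
  have := jacobian_sq_factorization_of_angles (2 * π * θ₁) (2 * π * θ₂)
  ring_nf at this ⊢
  exact this
end

section
/- The polynomial x⁵ − 11x⁴ + 44x³ − 77x² + 55x − 11 has five distinct real roots b₁ > b₂ > b₃ > b₄ > b₅, all lying in the open interval (0, 11), and their sum is 11. -/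
/-!
The polynomial changes sign between consecutive points of `0 < 1/2 < 3/2 < 3 < 7/2 < 4`, so the
intermediate value theorem gives five distinct roots in `(0, 4)`. A monic quintic has no other
roots, so it splits and, by Vieta, the roots sum to minus its subleading coefficient, `11`.
-/

open Polynomial Set

theorem exists_mem_Ioo_eq_zero_of_mul_neg {α δ : Type*} [ConditionallyCompleteLinearOrder α]
    [TopologicalSpace α] [OrderTopology α] [DenselyOrdered α] [Field δ] [LinearOrder δ]
    [IsStrictOrderedRing δ] [TopologicalSpace δ] [OrderClosedTopology δ]
    {f : α → δ} {a b : α} (hab : a ≤ b) (hf : ContinuousOn f (Icc a b)) (h : f a * f b < 0) :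
    ∃ x ∈ Ioo a b, f x = 0 := by
  rcases mul_neg_iff.mp h with ⟨ha, hb⟩ | ⟨ha, hb⟩
  · exact intermediate_value_Ioo' hab hf ⟨hb, ha⟩
  · exact intermediate_value_Ioo hab hf ⟨ha, hb⟩

theorem Polynomial.Monic.sum_eq_neg_nextCoeff {R : Type*} [CommRing R] [IsDomain R]
    {p : R[X]} (hp : p.Monic) {S : Finset R} (hS : ∀ x ∈ S, p.eval x = 0)
    (hcard : p.natDegree ≤ S.card) :
    ∑ x ∈ S, x = -p.nextCoeff := by
  have hroots : p.roots = S.val := roots_eq_of_natDegree_le_card_of_ne_zero hS hcard hp.ne_zero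
  have hsplits : p.Splits := by
    rw [splits_iff_card_roots]
    exact (card_roots' p).antisymm (hroots ▸ hcard)
  rw [hsplits.nextCoeff_eq_neg_sum_roots_of_monic hp, hroots, neg_neg, Finset.sum_eq_multiset_sum,
    Multiset.map_id']

noncomputable def e8Polynomial : ℝ[X] :=
  X ^ 5 - 11 * X ^ 4 + 44 * X ^ 3 - 77 * X ^ 2 + 55 * X - 11

theorem e8Polynomial_eval (x : ℝ) :
    e8Polynomial.eval x = x ^ 5 - 11 * x ^ 4 + 44 * x ^ 3 - 77 * x ^ 2 + 55 * x - 11 := by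
  simp [e8Polynomial]

theorem e8Polynomial_natDegree : e8Polynomial.natDegree = 5 := by
  unfold e8Polynomial; compute_degree!

theorem e8Polynomial_monic : e8Polynomial.Monic := by
  unfold e8Polynomial; monicity!

theorem e8Polynomial_nextCoeff : e8Polynomial.nextCoeff = -11 := by
  rw [nextCoeff, e8Polynomial_natDegree]
  norm_num [e8Polynomial, coeff_X, coeff_X_pow, coeff_one]

theorem exists_e8Polynomial_root_Ioo (a b : ℝ) (hab : a ≤ b)
    (h : e8Polynomial.eval a * e8Polynomial.eval b < 0) :
    ∃ x ∈ Ioo a b, e8Polynomial.eval x = 0 :=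
  exists_mem_Ioo_eq_zero_of_mul_neg hab e8Polynomial.continuousOn h

theorem roots_of_E8_polynomial :
    ∃ b₁ b₂ b₃ b₄ b₅ : ℝ,
      b₁ > b₂ ∧ b₂ > b₃ ∧ b₃ > b₄ ∧ b₄ > b₅ ∧
      (∀ x ∈ ({b₁, b₂, b₃, b₄, b₅} : Set ℝ),
        x ∈ Set.Ioo (0:ℝ) 11 ∧
          x ^ 5 - 11 * x ^ 4 + 44 * x ^ 3 - 77 * x ^ 2 + 55 * x - 11 = 0) ∧
      b₁ + b₂ + b₃ + b₄ + b₅ = 11 := by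
  obtain ⟨b₅, ⟨h₅, h₅'⟩, r₅⟩ :=
    exists_e8Polynomial_root_Ioo 0 (1/2) (by norm_num) (by norm_num [e8Polynomial_eval])
  obtain ⟨b₄, ⟨h₄, h₄'⟩, r₄⟩ :=
    exists_e8Polynomial_root_Ioo (1/2) (3/2) (by norm_num) (by norm_num [e8Polynomial_eval])
  obtain ⟨b₃, ⟨h₃, h₃'⟩, r₃⟩ :=
    exists_e8Polynomial_root_Ioo (3/2) 3 (by norm_num) (by norm_num [e8Polynomial_eval])
  obtain ⟨b₂, ⟨h₂, h₂'⟩, r₂⟩ :=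
    exists_e8Polynomial_root_Ioo 3 (7/2) (by norm_num) (by norm_num [e8Polynomial_eval])
  obtain ⟨b₁, ⟨h₁, h₁'⟩, r₁⟩ :=
    exists_e8Polynomial_root_Ioo (7/2) 4 (by norm_num) (by norm_num [e8Polynomial_eval])
  have hlt : b₁ > b₂ ∧ b₂ > b₃ ∧ b₃ > b₄ ∧ b₄ > b₅ := by
    refine ⟨?_, ?_, ?_, ?_⟩ <;> linarith
  have hnodup : [b₁, b₂, b₃, b₄, b₅].Nodup :=
    (show [b₁, b₂, b₃, b₄, b₅].IsChain (· > ·) by simpa using hlt).pairwise.nodup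
  have hsum :=
    e8Polynomial_monic.sum_eq_neg_nextCoeff (S := [b₁, b₂, b₃, b₄, b₅].toFinset)
      (by simp [r₁, r₂, r₃, r₄, r₅])
      (e8Polynomial_natDegree.trans (List.toFinset_card_of_nodup hnodup).symm).le
  rw [List.sum_toFinset _ hnodup, e8Polynomial_nextCoeff] at hsum
  refine ⟨b₁, b₂, b₃, b₄, b₅, hlt.1, hlt.2.1, hlt.2.2.1, hlt.2.2.2, ?_,
    by simpa [add_assoc] using hsum⟩
  rintro x (rfl | rfl | rfl | rfl | rfl) <;>
    exact ⟨⟨by linarith, by linarith⟩, by rwa [← e8Polynomial_eval]⟩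
end
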